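/- arXiv:2402.18675 — 2 statements merged into one kernel-verified Lean document; each statement's English description precedes it below -/
import Mathlib

section
/- A binary matrix D ∈ {0,1}^{N×N} satisfies condition set P = {1°, 2°, 3°, 4°, 5°} if and only if D is the heterogeneous dependency matrix D(par, σ) of some heterogeneous out-tree (par, σ). -/
/-- Iterate the parent function `k` times starting from node `i`. -/
def parIter {N : ℕ} (par : Fin N → Option (Fin N)) : ℕ → Fin N → Option (Fin N)
  | 0, i => some i
  | k + 1, i => (par i).bind (parIter par k)

/-- `a` is an ancestor of `i`: `a` is reached from `i` by iterating `par` at least once. -/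
def IsAncestor {N : ℕ} (par : Fin N → Option (Fin N)) (a i : Fin N) : Prop :=
  ∃ k : ℕ, 0 < k ∧ parIter par k i = some a

/-- `par` is a well-founded parent function. -/
def WFParent {N : ℕ} (par : Fin N → Option (Fin N)) : Prop :=
  WellFounded (fun a i : Fin N => par i = some a)

open Classical in
/-- The heterogeneous dependency matrix of the heterogeneous out-tree `(par, σ)`:
`D i j = 1` iff `σ⁻¹ j` equals `i` or is an ancestor of `i`. -/
noncomputable def depMatrix {N : ℕ} (par : Fin N → Option (Fin N)) (σ : Equiv.Perm (Fin N)) :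
    Fin N → Fin N → Bool :=
  fun i j => decide (σ.symm j = i ∨ IsAncestor par (σ.symm j) i)

/-- The depth of node `i`: the least `k ≥ 1` with `parIter par k i = none`. -/
noncomputable def treeDepth {N : ℕ} (par : Fin N → Option (Fin N)) (i : Fin N) : ℕ :=
  sInf {k : ℕ | 1 ≤ k ∧ parIter par k i = none}

/-- Node `i` is a leaf: no node has `i` as its parent. -/
def IsLeaf {N : ℕ} (par : Fin N → Option (Fin N)) (i : Fin N) : Prop :=
  ∀ x, par x ≠ some i

/-- Tree dilation `di^{i→j}`: replace `par i` by `some j`. -/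
def treeDilate {N : ℕ} (par : Fin N → Option (Fin N)) (i j : Fin N) :
    Fin N → Option (Fin N) :=
  Function.update par i (some j)

/-- Tree absorption `ab^{j→i}`: replace `par i` by `none`. -/
def treeAbsorb {N : ℕ} (par : Fin N → Option (Fin N)) (i : Fin N) :
    Fin N → Option (Fin N) :=
  Function.update par i none

/-- Applicability of tree dilation `di^{i→j}`. -/
def DilateOK {N : ℕ} (par : Fin N → Option (Fin N)) (i j : Fin N) : Prop :=
  par i = none ∧ j ≠ i ∧ ¬ IsAncestor par i j

/-- Applicability of tree absorption `ab^{j→i}`. -/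
def AbsorbOK {N : ℕ} (par : Fin N → Option (Fin N)) (i j : Fin N) : Prop :=
  IsLeaf par i ∧ par i = some j

/-- Number of ones in a binary row. -/
def onesCount {N : ℕ} (r : Fin N → Bool) : ℕ :=
  (Finset.univ.filter fun c => r c = true).card

/-- Entrywise XOR of two rows. -/
def rowXor {N : ℕ} (r s : Fin N → Bool) : Fin N → Bool :=
  fun c => xor (r c) (s c)

/-- Replace row `i` of `S` by the XOR of rows `i` and `j`. -/
def matUpdateXor {K N : ℕ} (S : Fin K → Fin N → Bool) (i j : Fin K) :
    Fin K → Fin N → Bool :=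
  Function.update S i (rowXor (S i) (S j))

/-- Applicability of matrix absorption `ab^{j→i}`. -/
def MatAbsorbOK {K N : ℕ} (S : Fin K → Fin N → Bool) (i j : Fin K) : Prop :=
  onesCount (rowXor (S i) (S j)) = 1 ∧ onesCount (S j) < onesCount (S i)

/-- Applicability of matrix dilation `di^{i→j}`. -/
def MatDilateOK {K N : ℕ} (S : Fin K → Fin N → Bool) (i j : Fin K) : Prop :=
  onesCount (S i) = 1 ∧ ∀ c, ¬ (S i c = true ∧ S j c = true)

/-- A permutation matrix: exactly one `1` in each row and each column. -/
def IsPermMatrix {N : ℕ} (S : Fin N → Fin N → Bool) : Prop :=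
  (∀ i, ∃! j, S i j = true) ∧ (∀ j, ∃! i, S i j = true)

/-- Column set `S_c` of column `c`. -/
def colSet {K N : ℕ} (D : Fin K → Fin N → Bool) (c : Fin N) : Set (Fin K) :=
  {r | D r c = true}

/-- Unique element set `J_{S_c}`: `S_c` minus the union of all column sets that are
proper subsets of `S_c`. -/
def JSet {K N : ℕ} (D : Fin K → Fin N → Bool) (c : Fin N) : Set (Fin K) :=
  {r | r ∈ colSet D c ∧ ∀ c' : Fin N, colSet D c' ⊂ colSet D c → r ∉ colSet D c'}

/-- `1°`: no row is all-zero. -/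
def Cond1 {K N : ℕ} (D : Fin K → Fin N → Bool) : Prop :=
  ∀ r, ∃ c, D r c = true

/-- `2°`: no column is all-zero. -/
def Cond2 {K N : ℕ} (D : Fin K → Fin N → Bool) : Prop :=
  ∀ c, ∃ r, D r c = true

/-- `3°`: no two distinct rows are equal. -/
def Cond3 {K N : ℕ} (D : Fin K → Fin N → Bool) : Prop :=
  ∀ r₁ r₂, (∀ c, D r₁ c = D r₂ c) → r₁ = r₂

/-- `4°`: no two distinct columns are equal. -/
def Cond4 {K N : ℕ} (D : Fin K → Fin N → Bool) : Prop :=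
  ∀ c₁ c₂, (∀ r, D r c₁ = D r c₂) → c₁ = c₂

/-- `5°`: any two column sets are nested or disjoint. -/
def Cond5 {K N : ℕ} (D : Fin K → Fin N → Bool) : Prop :=
  ∀ c₁ c₂, colSet D c₁ ⊆ colSet D c₂ ∨ colSet D c₂ ⊆ colSet D c₁ ∨
    colSet D c₁ ∩ colSet D c₂ = ∅

/-- `6°`: every unique element set has exactly one element. -/
def Cond6 {K N : ℕ} (D : Fin K → Fin N → Bool) : Prop :=
  ∀ c, ∃! r, r ∈ JSet D c

/-- Condition set `P = {1°, 2°, 3°, 4°, 5°}`. -/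
def CondP {K N : ℕ} (D : Fin K → Fin N → Bool) : Prop :=
  Cond1 D ∧ Cond2 D ∧ Cond3 D ∧ Cond4 D ∧ Cond5 D

/-- Condition set `P⁻ = {1°, 3°, 5°}`. -/
def CondPminus {K N : ℕ} (D : Fin K → Fin N → Bool) : Prop :=
  Cond1 D ∧ Cond3 D ∧ Cond5 D

/-- One step of matrix absorption or matrix dilation. -/
def MatStep {N : ℕ} (S T : Fin N → Fin N → Bool) : Prop :=
  ∃ i j, (MatAbsorbOK S i j ∨ MatDilateOK S i j) ∧ T = matUpdateXor S i j

/-! Every row `r` of a matrix with `P` has a smallest column set `S_{τ r}` containing it, and row `r`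
is then the indicator of the columns `c` with `S_{τ r} ⊆ S_c`. By `3°` and `4°`, `τ` is a bijection
from rows to columns along which `⊆` between column sets is a finite order whose up-sets are chains
(`5°`): a forest order, realized by the parent function sending a node to its immediate successor.
Conversely the ancestors of a node in an out-tree form a chain, which gives `5°`, while `3°` and `4°`
come from the absence of cycles. -/

theorem exists_forall_le_of_isChain {ι β : Type*} [Finite ι] [Preorder β] {P : ι → Prop}
    (f : ι → β) (hP : ∃ i, P i) (hchain : ∀ i j, P i → P j → f i ≤ f j ∨ f j ≤ f i) :
    ∃ i, P i ∧ ∀ j, P j → f i ≤ f j := by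
  obtain ⟨i, hi, hmin⟩ := Set.Finite.exists_minimalFor f {i | P i} (Set.toFinite _) hP
  exact ⟨i, hi, fun j hj => (hchain i j hi hj).elim id (hmin hj)⟩

section OutTree

variable {N : ℕ} {par : Fin N → Option (Fin N)} {a b i p : Fin N}

theorem parIter_add (par : Fin N → Option (Fin N)) (k m : ℕ) (i : Fin N) :
    parIter par (k + m) i = (parIter par m i).bind (parIter par k) := by
  induction m generalizing i with
  | zero => rfl
  | succ m ih =>
    show (par i).bind (parIter par (k + m)) = ((par i).bind (parIter par m)).bind (parIter par k)
    cases par i <;> simp [ih]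

theorem parIter_succ_ne_self (hwf : WFParent par) (k : ℕ) (i : Fin N) :
    parIter par (k + 1) i ≠ some i := by
  induction i using hwf.induction generalizing k with
  | _ i ih =>
    intro hcycle
    cases hp : par i with
    | none => simp [parIter, hp] at hcycle
    | some p =>
      simp only [parIter, hp, Option.bind_some] at hcycle
      -- the cycle through `i` is also a cycle through its parent `p`
      refine ih p hp k ?_
      rw [add_comm, parIter_add, hcycle]
      simp [parIter, hp]

def IsAncestorOrSelf (par : Fin N → Option (Fin N)) (a i : Fin N) : Prop :=
  ∃ k, parIter par k i = some a

theorem isAncestorOrSelf_iff : IsAncestorOrSelf par a i ↔ a = i ∨ IsAncestor par a i := by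
  constructor
  · rintro ⟨_ | k, hk⟩
    · exact Or.inl (Option.some_inj.mp hk).symm
    · exact Or.inr ⟨k + 1, k.succ_pos, hk⟩
  · rintro (rfl | ⟨k, -, hk⟩)
    exacts [⟨0, rfl⟩, ⟨k, hk⟩]

namespace IsAncestorOrSelf

theorem refl (a : Fin N) : IsAncestorOrSelf par a a := ⟨0, rfl⟩

theorem trans (hab : IsAncestorOrSelf par a b) (hbi : IsAncestorOrSelf par b i) :
    IsAncestorOrSelf par a i := by
  obtain ⟨k, hk⟩ := hab
  obtain ⟨m, hm⟩ := hbi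
  exact ⟨k + m, by rw [parIter_add, hm, Option.bind_some, hk]⟩

theorem of_parent_eq (hp : par i = some p) (ha : IsAncestorOrSelf par a p) :
    IsAncestorOrSelf par a i :=
  ha.trans ⟨1, by simp [parIter, hp]⟩

theorem total (ha : IsAncestorOrSelf par a i) (hb : IsAncestorOrSelf par b i) :
    IsAncestorOrSelf par a b ∨ IsAncestorOrSelf par b a := by
  obtain ⟨k, hk⟩ := ha
  obtain ⟨m, hm⟩ := hb
  rcases le_total k m with hkm | hmk
  · obtain ⟨d, rfl⟩ := Nat.exists_eq_add_of_le hkm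
    right
    exact ⟨d, by rw [add_comm, parIter_add, hk] at hm; exact hm⟩
  · obtain ⟨d, rfl⟩ := Nat.exists_eq_add_of_le hmk
    left
    exact ⟨d, by rw [add_comm, parIter_add, hm] at hk; exact hk⟩

theorem antisymm (hwf : WFParent par) (hai : IsAncestorOrSelf par a i)
    (hia : IsAncestorOrSelf par i a) : a = i := by
  obtain ⟨_ | k, hk⟩ := hai
  · exact (Option.some_inj.mp hk).symm
  · obtain ⟨m, hm⟩ := hia
    refine absurd ?_ (parIter_succ_ne_self hwf (m + k) i)
    rw [add_assoc, parIter_add, hk, Option.bind_some, hm]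

theorem le_of_forall_parent_le {β : Type*} [Preorder β] {g : Fin N → β}
    (hg : ∀ i a, par i = some a → g i ≤ g a) (h : IsAncestorOrSelf par a i) : g i ≤ g a := by
  obtain ⟨k, hk⟩ := h
  induction k generalizing i with
  | zero =>
    obtain rfl := Option.some_inj.mp hk
    exact le_rfl
  | succ k ih =>
    cases hp : par i with
    | none => simp [parIter, hp] at hk
    | some p =>
      simp only [parIter, hp, Option.bind_some] at hk
      exact (hg i p hp).trans (ih hk)

end IsAncestorOrSelf

theorem depMatrix_eq_true_iff (σ : Equiv.Perm (Fin N)) (i j : Fin N) :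
    depMatrix par σ i j = true ↔ IsAncestorOrSelf par (σ.symm j) i := by
  simp only [depMatrix, decide_eq_true_eq, isAncestorOrSelf_iff]

theorem colSet_depMatrix (σ : Equiv.Perm (Fin N)) (j : Fin N) :
    colSet (depMatrix par σ) j = {i | IsAncestorOrSelf par (σ.symm j) i} :=
  Set.ext fun i => depMatrix_eq_true_iff σ i j

theorem condP_depMatrix (hwf : WFParent par) (σ : Equiv.Perm (Fin N)) :
    CondP (depMatrix par σ) := by
  refine ⟨fun i => ⟨σ i, ?_⟩, fun j => ⟨σ.symm j, ?_⟩, fun i₁ i₂ h => ?_, fun j₁ j₂ h => ?_,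
    fun j₁ j₂ => ?_⟩
  · simpa [depMatrix_eq_true_iff] using IsAncestorOrSelf.refl i
  · exact (depMatrix_eq_true_iff σ _ j).2 (.refl _)
  · have hrow : ∀ j, IsAncestorOrSelf par (σ.symm j) i₁ ↔ IsAncestorOrSelf par (σ.symm j) i₂ :=
      fun j => by rw [← depMatrix_eq_true_iff, ← depMatrix_eq_true_iff, h j]
    have h₁ := (hrow (σ i₁)).1
    have h₂ := (hrow (σ i₂)).2
    simp only [Equiv.symm_apply_apply, IsAncestorOrSelf.refl, true_implies] at h₁ h₂
    exact h₁.antisymm hwf h₂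
  · replace h : ∀ i, IsAncestorOrSelf par (σ.symm j₁) i ↔ IsAncestorOrSelf par (σ.symm j₂) i :=
      fun i => by rw [← depMatrix_eq_true_iff, ← depMatrix_eq_true_iff, h i]
    exact σ.symm.injective (((h _).2 (.refl _)).antisymm hwf ((h _).1 (.refl _)))
  · simp only [colSet_depMatrix]
    by_cases hdisj : ∃ i, IsAncestorOrSelf par (σ.symm j₁) i ∧ IsAncestorOrSelf par (σ.symm j₂) i
    · obtain ⟨i, h₁, h₂⟩ := hdisj
      rcases h₁.total h₂ with h | h
      · exact Or.inr (Or.inl fun _ hx => h.trans hx)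
      · exact Or.inl fun _ hx => h.trans hx
    · push Not at hdisj
      exact Or.inr (Or.inr (Set.eq_empty_of_forall_notMem fun i hi => hdisj i hi.1 hi.2))

/-- The parent of a node is its least strict upper bound. -/
theorem exists_wfParent_isAncestorOrSelf_iff {β : Type*} [PartialOrder β] (f : Fin N → β)
    (hf : Function.Injective f) (hchain : ∀ i a b, f i ≤ f a → f i ≤ f b → f a ≤ f b ∨ f b ≤ f a) :
    ∃ par : Fin N → Option (Fin N), WFParent par ∧ ∀ a i, IsAncestorOrSelf par a i ↔ f i ≤ f a := by
  have hparent : ∀ i, ∃ p : Option (Fin N), ∀ b, f i < f b ↔ ∃ a ∈ p, f a ≤ f b := by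
    intro i
    by_cases hup : ∃ b, f i < f b
    · obtain ⟨a, hia, hleast⟩ := exists_forall_le_of_isChain f hup
        fun a b ha hb => hchain i a b ha.le hb.le
      refine ⟨some a, fun b => ⟨fun hb => ⟨a, rfl, hleast b hb⟩, ?_⟩⟩
      rintro ⟨_, ha, hab⟩
      cases Option.mem_def.mp ha
      exact hia.trans_le hab
    · push Not at hup
      exact ⟨none, fun b => by simpa using hup b⟩
  choose par hpar using hparent
  have hlt : ∀ i a, par i = some a → f i < f a := fun i a h => (hpar i a).2 ⟨a, h, le_rfl⟩
  have hwf : WFParent par := by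
    let r : Fin N → Fin N → Prop := fun a i => f i < f a
    have : IsTrans (Fin N) r := ⟨fun _ _ _ h₁ h₂ => h₂.trans h₁⟩
    have : Std.Irrefl r := ⟨fun _ => lt_irrefl _⟩
    exact Subrelation.wf (fun {a i} h => hlt i a h) (Finite.wellFounded_of_trans_of_irrefl r)
  refine ⟨par, hwf, fun a i => ⟨IsAncestorOrSelf.le_of_forall_parent_le fun i a h => (hlt i a h).le,
    fun hia => ?_⟩⟩
  induction i using hwf.induction with
  | _ i ih =>
    rcases hia.lt_or_eq with hia | hia
    · obtain ⟨p, hp, hpa⟩ := (hpar i a).1 hia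
      exact .of_parent_eq hp (ih p hp hpa)
    · rw [hf hia]
      exact .refl a

end OutTree

section ColSet

variable {K N : ℕ} {D : Fin K → Fin N → Bool}

theorem Cond4.colSet_injective (h4 : Cond4 D) : Function.Injective (colSet D) := fun c₁ c₂ h =>
  h4 c₁ c₂ fun r => Bool.eq_iff_iff.mpr (Set.ext_iff.mp h r)

theorem Cond5.colSet_subset_or_superset {r : Fin K} {c₁ c₂ : Fin N} (h5 : Cond5 D)
    (h₁ : r ∈ colSet D c₁) (h₂ : r ∈ colSet D c₂) :
    colSet D c₁ ⊆ colSet D c₂ ∨ colSet D c₂ ⊆ colSet D c₁ :=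
  (h5 c₁ c₂).imp_right fun h => h.resolve_right (Set.nonempty_iff_ne_empty.mp ⟨r, h₁, h₂⟩)

theorem exists_forall_eq_true_iff_colSet_subset (h1 : Cond1 D) (h5 : Cond5 D) (r : Fin K) :
    ∃ c, ∀ c', D r c' = true ↔ colSet D c ⊆ colSet D c' := by
  obtain ⟨c, hc, hleast⟩ := exists_forall_le_of_isChain (colSet D) (h1 r)
    fun _ _ h₁ h₂ => h5.colSet_subset_or_superset h₁ h₂
  exact ⟨c, fun c' => ⟨hleast c', fun h => h hc⟩⟩

end ColSet

theorem exists_depMatrix_eq_of_condP {N : ℕ} {D : Fin N → Fin N → Bool} (hD : CondP D) :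
    ∃ (par : Fin N → Option (Fin N)) (σ : Equiv.Perm (Fin N)),
      WFParent par ∧ depMatrix par σ = D := by
  obtain ⟨h1, -, h3, h4, h5⟩ := hD
  choose τ hτ using exists_forall_eq_true_iff_colSet_subset h1 h5
  have hmem : ∀ r, r ∈ colSet D (τ r) := fun r => (hτ r (τ r)).2 subset_rfl
  have hτinj : Function.Injective τ := fun r₁ r₂ h =>
    h3 r₁ r₂ fun c => Bool.eq_iff_iff.mpr (by rw [hτ, hτ, h])
  let σ := Equiv.ofBijective τ (Finite.injective_iff_bijective.mp hτinj)
  obtain ⟨par, hwf, hanc⟩ := exists_wfParent_isAncestorOrSelf_iff (fun r => colSet D (σ r))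
    (h4.colSet_injective.comp hτinj)
    fun r _ _ ha hb => h5.colSet_subset_or_superset (ha (hmem r)) (hb (hmem r))
  refine ⟨par, σ, hwf, funext₂ fun r c => Bool.eq_iff_iff.mpr ?_⟩
  rw [depMatrix_eq_true_iff, hanc, hτ, σ.apply_symm_apply]
  rfl

/-- A binary matrix `D ∈ {0,1}^{N×N}` satisfies condition set
`P = {1°, 2°, 3°, 4°, 5°}` iff it is the heterogeneous dependency matrix of some
heterogeneous out-tree. -/
theorem condP_iff_depMatrix {N : ℕ} (D : Fin N → Fin N → Bool) :
    CondP D ↔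
      ∃ (par : Fin N → Option (Fin N)) (σ : Equiv.Perm (Fin N)),
        WFParent par ∧ depMatrix par σ = D := by
  constructor
  · exact exists_depMatrix_eq_of_condP
  · rintro ⟨par, σ, hwf, rfl⟩
    exact condP_depMatrix hwf σ
end

section
/- If a K×N binary matrix D⁻ satisfies condition set P⁻ = {1°, 3°, 5°}, then there exist K distinct columns c₁, …, c_K of D⁻ such that each unique element set J_{S_{c_k}} contains exactly one row, these singleton sets are pairwise distinct, and together they contain all K rows of D⁻. -/
/-!
Each row `r` lies in some column (1°); a column `c ∋ r` whose column set is minimal for inclusion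
has `r ∈ J_{S_c}`. By 5°, any row of `J_{S_c}` lies in exactly the columns whose sets contain
`S_c`, so all rows of `J_{S_c}` coincide as rows of `D` and, by 3°, `J_{S_c} = {r}`. Taking such
a column for every row gives the `K` columns.
-/

section JSet

variable {K N : ℕ} {D : Fin K → Fin N → Bool}

lemma colSet_subset_of_mem_JSet (h5 : Cond5 D) {x c : Fin N} {a : Fin K}
    (ha : a ∈ JSet D x) (hc : a ∈ colSet D c) : colSet D x ⊆ colSet D c := by
  rcases h5 c x with hcx | hxc | hdisj
  · rcases hcx.eq_or_ssubset with heq | hlt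
    · exact heq.symm.subset
    · exact absurd hc (ha.2 c hlt)
  · exact hxc
  · exact absurd (hdisj ▸ ⟨hc, ha.1⟩ : a ∈ (∅ : Set (Fin K))) (Set.notMem_empty a)

lemma mem_colSet_iff_of_mem_JSet (h5 : Cond5 D) {x : Fin N} {a b : Fin K}
    (ha : a ∈ JSet D x) (hb : b ∈ JSet D x) (c : Fin N) :
    a ∈ colSet D c ↔ b ∈ colSet D c :=
  ⟨fun hac => colSet_subset_of_mem_JSet h5 ha hac hb.1,
    fun hbc => colSet_subset_of_mem_JSet h5 hb hbc ha.1⟩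

lemma JSet_eq_singleton (h3 : Cond3 D) (h5 : Cond5 D) {x : Fin N} {r : Fin K}
    (hr : r ∈ JSet D x) : JSet D x = {r} :=
  Set.eq_singleton_iff_unique_mem.2
    ⟨hr, fun a ha => h3 a r fun c => Bool.eq_iff_iff.2 (mem_colSet_iff_of_mem_JSet h5 ha hr c)⟩

lemma exists_mem_JSet (h1 : Cond1 D) (r : Fin K) : ∃ c, r ∈ JSet D c := by
  obtain ⟨c, hrc, hmin⟩ :=
    (InvImage.wf (colSet D) wellFounded_lt).has_min {c | D r c = true} (h1 r)
  exact ⟨c, hrc, fun c' hlt hrc' => hmin c' hrc' hlt⟩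

end JSet

/-- If a `K × N` binary matrix satisfies `P⁻ = {1°, 3°, 5°}`, then
there are `K` distinct columns whose unique element sets are singletons, pairwise
distinct, and together contain all `K` rows. -/
theorem exists_K_columns_with_singleton_JSets {K N : ℕ} (D : Fin K → Fin N → Bool)
    (h : CondPminus D) :
    ∃ c : Fin K → Fin N, Function.Injective c ∧
      (∀ k : Fin K, ∃ r : Fin K, JSet D (c k) = {r}) ∧
      (∀ k₁ k₂ : Fin K, k₁ ≠ k₂ → JSet D (c k₁) ≠ JSet D (c k₂)) ∧
      (∀ r : Fin K, ∃ k : Fin K, r ∈ JSet D (c k)) := by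
  obtain ⟨h1, h3, h5⟩ := h
  choose c hc using exists_mem_JSet h1
  have hJ : ∀ r, JSet D (c r) = {r} := fun r => JSet_eq_singleton h3 h5 (hc r)
  have hc_inj : Function.Injective c := fun a b hab =>
    Set.singleton_injective (by rw [← hJ a, ← hJ b, hab])
  refine ⟨c, hc_inj, fun k => ⟨k, hJ k⟩, fun k₁ k₂ hne heq => hne ?_, fun r => ⟨r, hc r⟩⟩
  exact Set.singleton_injective (by rw [← hJ k₁, ← hJ k₂, heq])
end
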